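/- Let T : M → M be a piecewise C^{ᾱ} expanding map. Then the asymptotic complexity at the beginning satisfies D^b(T) ≤ P*_top(T, 0, ∂O). -/

import Mathlib

open MeasureTheory Filter Set Topology
open scoped ENNReal NNReal Classical

noncomputable section

abbrev Euc (d : ℕ) := EuclideanSpace ℝ (Fin d)

/-- `C^β` smoothness in the Hölder sense on a set, for a real exponent `β > 0`:
`⌊β⌋` continuous derivatives, the top one being `(β - ⌊β⌋)`-Hölder. -/
def CHolderOn {d : ℕ} {F : Type*} [NormedAddCommGroup F] [NormedSpace ℝ F]
    (β : ℝ) (f : Euc d → F) (s : Set (Euc d)) : Prop :=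
  ContDiffOn ℝ (⌊β⌋₊ : ℕ) f s ∧
    ∃ C : ℝ≥0, HolderOnWith C (β - ⌊β⌋₊).toNNReal (iteratedFDerivWithin ℝ ⌊β⌋₊ f s) s

/-- A piecewise `C^abar` expanding map `T` on `M ⊆ ℝ^d`. -/
structure PiecewiseExpanding (d : ℕ) (M : Set (Euc d)) (T : Euc d → Euc d) (abar : ℝ) :
    Type 1 where
  I : Type
  fintype_I : Fintype I
  O : I → Set (Euc d)
  isOpen_O : ∀ i, IsOpen (O i)
  O_subset : ∀ i, O i ⊆ M
  disj : Pairwise (Function.onFun Disjoint O)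
  ae_cover : volume (M \ ⋃ i, O i) = 0
  bd_pieces : ∀ i, ∃ (N : ℕ) (φ : Fin N → EuclideanSpace ℝ (Fin (d - 1)) → Euc d)
      (K : Fin N → Set (EuclideanSpace ℝ (Fin (d - 1)))),
      (∀ j, IsCompact (K j) ∧ ContDiffOn ℝ 1 (φ j) (K j)) ∧
      frontier (O i) = ⋃ j, φ j '' K j
  Otil : I → Set (Euc d)
  isOpen_Otil : ∀ i, IsOpen (Otil i)
  closure_subset : ∀ i, closure (O i) ⊆ Otil i
  Ttil : I → Euc d → Euc d
  Ttil_smooth : ∀ i, CHolderOn abar (Ttil i) (Otil i)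
  Ttil_inj : ∀ i, InjOn (Ttil i) (Otil i)
  Ttil_inv_smooth : ∀ i, CHolderOn abar (Function.invFunOn (Ttil i) (Otil i)) (Ttil i '' Otil i)
  T_eq : ∀ i, EqOn T (Ttil i) (O i)
  lam : ℝ
  one_lt_lam : 1 < lam
  expansion : ∀ i, ∀ x ∈ Otil i, ∀ v, lam * ‖v‖ ≤ ‖fderiv ℝ (Ttil i) x v‖
  mapsTo : MapsTo T M M
  measurable_T : Measurable T

attribute [instance] PiecewiseExpanding.fintype_I

namespace PiecewiseExpanding

variable {d : ℕ} {M : Set (Euc d)} {T : Euc d → Euc d} {abar : ℝ}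
variable (P : PiecewiseExpanding d M T abar)

/-- The `n`-cylinder `O_𝐢 = ⋂_{k<n} T^{-k} O_{i_k}`. -/
def cyl (n : ℕ) (w : Fin n → P.I) : Set (Euc d) :=
  ⋂ k : Fin n, T^[(k : ℕ)] ⁻¹' P.O (w k)

/-- The boundary `∂𝒪 = ⋃ i, ∂ O_i`. -/
def bdO : Set (Euc d) := ⋃ i, frontier (P.O i)

/-- The singular set `𝒮_𝒪 = ⋃_{k ≥ 0} T^{-k} ∂𝒪`. -/
def sing : Set (Euc d) := ⋃ k : ℕ, T^[k] ⁻¹' P.bdO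

/-- Topological pressure `P^*_top(T, {log f_n}, E)` of a (sub)multiplicative sequence `f`
on the set `E`, defined through sums over `n`-cylinders meeting `E`. -/
def pressure (f : ℕ → Euc d → ℝ) (E : Set (Euc d)) : ℝ :=
  atTop.limsup fun n : ℕ => (n : ℝ)⁻¹ *
    Real.log (∑ w ∈ Finset.univ.filter
        (fun w : Fin n → P.I => (E ∩ closure (P.cyl n w)).Nonempty),
      sSup (f n '' P.cyl n w))

/-- The `n`-complexity at the beginning `D^b_n(T)`. -/
def DbN (n : ℕ) : ℕ :=
  sSup ((fun x => (Finset.univ.filter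
    (fun w : Fin n → P.I => x ∈ closure (P.cyl n w))).card) '' M)

/-- The asymptotic complexity at the beginning `D^b(T)`. -/
def Db : ℝ := atTop.limsup fun n : ℕ => (n : ℝ)⁻¹ * Real.log (P.DbN n)

/-- The weighted `n`-complexity at the beginning `D^b_n(T, {log f_n})`. -/
def DbNW (f : ℕ → Euc d → ℝ) (n : ℕ) : ℝ :=
  sSup ((fun x => ∑ w ∈ Finset.univ.filter
      (fun w : Fin n → P.I => x ∈ closure (P.cyl n w)),
    sSup (f n '' closure (P.cyl n w))) '' M)

/-- The weighted asymptotic complexity at the beginning `D^b(T, {log f_n})`. -/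
def DbW (f : ℕ → Euc d → ℝ) : ℝ :=
  atTop.limsup fun n : ℕ => (n : ℝ)⁻¹ * Real.log (P.DbNW f n)

/-- The `n`-complexity at the end `D^e_n(T)`. -/
def DeN (n : ℕ) : ℕ :=
  sSup ((fun x => (Finset.univ.filter
    (fun w : Fin n → P.I => x ∈ closure (T^[n] '' P.cyl n w))).card) '' M)

/-- The asymptotic complexity at the end `D^e(T)`. -/
def De : ℝ := atTop.limsup fun n : ℕ => (n : ℝ)⁻¹ * Real.log (P.DeN n)

/-- A function is piecewise `C^α` if its restriction to each piece `O_i` is `C^α`. -/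
def PiecewiseCHolder (α : ℝ) {F : Type*} [NormedAddCommGroup F] [NormedSpace ℝ F]
    (g : Euc d → F) : Prop :=
  ∀ i, CHolderOn α g (P.O i)

/-- A function is piecewise continuous if its restriction to each piece `O_i` extends
continuously to the neighbourhood `Õ_i`. -/
def PiecewiseContinuousF {F : Type*} [TopologicalSpace F] (g : Euc d → F) : Prop :=
  ∀ i, ∃ h : Euc d → F, ContinuousOn h (P.Otil i) ∧ EqOn g h (P.O i)

end PiecewiseExpanding

/-- `ν_n(x) = 1 / inf_{‖v‖=1} ‖D_x T^n v‖`. -/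
def nuIter {d : ℕ} (T : Euc d → Euc d) (n : ℕ) (x : Euc d) : ℝ :=
  (sInf ((fun v => ‖fderiv ℝ (T^[n]) x v‖) '' Metric.sphere (0 : Euc d) 1))⁻¹

/-- `|det D_x T^n|`. -/
def absDetIter {d : ℕ} (T : Euc d → Euc d) (n : ℕ) (x : Euc d) : ℝ :=
  |(fderiv ℝ (T^[n]) x).det|

/-- Birkhoff product `g^{(n)} = ∏_{k<n} g ∘ T^k`. -/
def birkhoff {d : ℕ} {F : Type*} [CommMonoid F] (T : Euc d → Euc d) (g : Euc d → F)
    (n : ℕ) (x : Euc d) : F :=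
  ∏ k ∈ Finset.range n, g (T^[k] x)

/-- A submultiplicative sequence of bounded nonnegative functions for `T` on `M`. -/
def Submult {d : ℕ} (T : Euc d → Euc d) (M : Set (Euc d)) (f : ℕ → Euc d → ℝ) : Prop :=
  (∀ n, ∀ x ∈ M, 0 ≤ f n x) ∧ (∀ n, ∃ C, ∀ x ∈ M, f n x ≤ C) ∧
    ∀ m n, 1 ≤ m → 1 ≤ n → ∀ x ∈ M, f (m + n) x ≤ f m (T^[n] x) * f n x

/-- Ergodic `T`-invariant Borel probability measures carried by `M`. -/
def ErgOn {d : ℕ} (T : Euc d → Euc d) (M : Set (Euc d)) (μ : Measure (Euc d)) : Prop :=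
  IsProbabilityMeasure μ ∧ μ Mᶜ = 0 ∧ Ergodic T μ

/-- Kolmogorov–Sinai entropy `h_μ(T)`, as the supremum over finite measurable partitions of the
exponential growth rate of the entropies of their dynamical refinements. -/
def ksEntropy {d : ℕ} (T : Euc d → Euc d) (μ : Measure (Euc d)) : ℝ :=
  ⨆ (m : ℕ) (ξ : Fin m → Set (Euc d)) (_ : (∀ j, MeasurableSet (ξ j)) ∧
      Pairwise (Function.onFun Disjoint ξ) ∧ μ (univ \ ⋃ j, ξ j) = 0),
    atTop.limsup fun n : ℕ => (n : ℝ)⁻¹ *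
      ∑ c : Fin n → Fin m,
        Real.negMulLog (μ (⋂ k : Fin n, T^[(k : ℕ)] ⁻¹' ξ (c k))).toReal

/-- The smallest Lyapunov exponent `χ_μ(DT)` of the derivative cocycle. -/
def smallestLyap {d : ℕ} (T : Euc d → Euc d) (μ : Measure (Euc d)) : ℝ :=
  atTop.limsup fun n : ℕ => -((n : ℝ)⁻¹ * ∫ x, Real.log (nuIter T n x) ∂μ)

/-- The transfer operator, as a map on functions: `L_g φ(x) = ∑_{y ∈ M, T y = x} g(y) φ(y)`. -/
def transferFun {d : ℕ} (T : Euc d → Euc d) (M : Set (Euc d)) (g φ : Euc d → ℂ)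
    (x : Euc d) : ℂ :=
  ∑' y : ↥(M ∩ T ⁻¹' {x}), g y * φ y

/-- The essential spectral radius of a bounded operator: the radius of the smallest disc
outside of which the spectrum consists of isolated eigenvalues of finite multiplicity. -/
def essentialSpectralRadius {X : Type*} [NormedAddCommGroup X] [NormedSpace ℂ X]
    (A : X →L[ℂ] X) : ℝ≥0∞ :=
  sInf {r : ℝ≥0∞ | ∀ z ∈ spectrum ℂ A, r < (‖z‖₊ : ℝ≥0∞) →
    𝓝[spectrum ℂ A \ {z}] z = ⊥ ∧
    Module.End.HasEigenvalue (A.toLinearMap) z ∧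
    FiniteDimensional ℂ ↥(Module.End.maxGenEigenspace (A.toLinearMap) z)}

/-- The Bessel-potential Sobolev norm `‖F⁻¹((1+|ξ|²)^{t/2} F u)‖_{L_p}` on `ℝ^d`. -/
def besselNorm (d : ℕ) (t p : ℝ) (u : Euc d → ℂ) : ℝ≥0∞ :=
  eLpNorm (FourierTransformInv.fourierInv
      fun ξ : Euc d => ((1 + ‖ξ‖ ^ 2) ^ (t / 2) : ℝ) • FourierTransform.fourier u ξ)
    (ENNReal.ofReal p) volume

/-- The Sobolev norm of `H^t_p(M)`, for `M ⊆ ℝ^d` (identity chart). -/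
def sobolevNormM {d : ℕ} (M : Set (Euc d)) (t p : ℝ) (φ : Euc d → ℂ) : ℝ≥0∞ :=
  besselNorm d t p (M.indicator φ)

/-- Membership in the Sobolev space `H^t_p(M) ⊆ L_p(M)`. -/
def InSobolev {d : ℕ} (M : Set (Euc d)) (t p : ℝ) (φ : Euc d → ℂ) : Prop :=
  MemLp φ (ENNReal.ofReal p) (volume.restrict M) ∧ sobolevNormM M t p φ < ⊤

/-- `X` is a realization of the Sobolev space `H^t_p(M)` as a Banach space: a complete normed
space whose elements are (classes of) functions of finite Sobolev norm, the norm of `X`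
being equivalent to the Sobolev norm. -/
structure SobolevRealization (d : ℕ) (M : Set (Euc d)) (t p : ℝ) (X : Type*)
    [NormedAddCommGroup X] [NormedSpace ℂ X] (ev : X → Euc d → ℂ) : Prop where
  complete : CompleteSpace X
  map_add : ∀ x y, ev (x + y) = ev x + ev y
  map_smul : ∀ (c : ℂ) x, ev (c • x) = c • ev x
  inj : ∀ x, ev x =ᵐ[volume.restrict M] (0 : Euc d → ℂ) → x = 0
  mem : ∀ x, InSobolev M t p (ev x)
  surj : ∀ φ : Euc d → ℂ, InSobolev M t p φ → ∃ x, ev x =ᵐ[volume.restrict M] φ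
  norm_equiv : ∃ C : ℝ, 0 < C ∧ ∀ x,
    sobolevNormM M t p (ev x) ≤ ENNReal.ofReal C * ENNReal.ofReal ‖x‖ ∧
    ENNReal.ofReal ‖x‖ ≤ ENNReal.ofReal C * sobolevNormM M t p (ev x)


/-- The weight sequence `f_{n,t,p}(x) = |g^{(n)}(x)| · |det D_x T^n|^{1/p} · ν_n(x)^t`. -/
def weightSeq {d : ℕ} (T : Euc d → Euc d) (g : Euc d → ℂ) (p t : ℝ) (n : ℕ) (x : Euc d) : ℝ :=
  ‖birkhoff T g n x‖ * absDetIter T n x ^ (1 / p) * nuIter T n x ^ t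


/-!
A point `x ∉ ∂O` lies in exactly one piece `O_i`, so every `(n+1)`-cylinder whose closure
contains `x` starts with `i`. As `T` agrees on `O_i` with a map continuous on a neighbourhood of
`cl O_i`, dropping the first symbol sends these cylinders injectively to `n`-cylinders whose
closure contains `T x`. Following the orbit until it first meets `∂O` (at time `k`, say), the
number of `n`-cylinders whose closure contains `x` is therefore at most the number of
`(n-k)`-cylinders whose closure meets `∂O`, unless it is at most one. Since these counts grow at
most exponentially, a bound by an earlier term of the sequence does not change the growth rate.
-/

lemma Real.log_natCast_le_log_natCast {k l : ℕ} (h : k ≤ l) : Real.log k ≤ Real.log l := by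
  rcases k.eq_zero_or_pos with rfl | hk
  · simpa using Real.log_natCast_nonneg l
  · exact Real.log_le_log (by exact_mod_cast hk) (by exact_mod_cast h)

lemma exists_le_add_mul_of_limsup_lt {b : ℕ → ℝ}
    (hbdd : IsBoundedUnder (· ≤ ·) atTop fun n : ℕ => (n : ℝ)⁻¹ * b n) {r : ℝ}
    (hr : atTop.limsup (fun n : ℕ => (n : ℝ)⁻¹ * b n) < r) :
    ∃ C, ∀ n, b n ≤ C + n * r := by
  have hev : ∀ᶠ n : ℕ in atTop, b n - n * r ≤ 0 := by
    filter_upwards [eventually_lt_of_limsup_lt hr hbdd, eventually_gt_atTop 0] with n hn hn0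
    have hn0' : (0 : ℝ) < n := by exact_mod_cast hn0
    rw [inv_mul_lt_iff₀ hn0'] at hn
    linarith
  obtain ⟨C, hC⟩ := (isBoundedUnder_of_eventually_le hev).bddAbove_range
  exact ⟨C, fun n => by linarith [hC (mem_range_self n)]⟩

lemma limsup_inv_mul_le_of_forall_exists_le {a b : ℕ → ℝ} (ha : ∀ n, 0 ≤ a n)
    (hb : ∀ n, 0 ≤ b n) (hbdd : IsBoundedUnder (· ≤ ·) atTop fun n : ℕ => (n : ℝ)⁻¹ * b n)
    (hab : ∀ n, ∃ m ≤ n, a n ≤ b m) :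
    atTop.limsup (fun n : ℕ => (n : ℝ)⁻¹ * a n) ≤
      atTop.limsup (fun n : ℕ => (n : ℝ)⁻¹ * b n) := by
  set L := atTop.limsup (fun n : ℕ => (n : ℝ)⁻¹ * b n)
  have hL : 0 ≤ L := le_limsup_of_frequently_le
    (Frequently.of_forall fun n => mul_nonneg (inv_nonneg.2 n.cast_nonneg) (hb n)) hbdd
  refine le_of_forall_pos_le_add fun ε hε => ?_
  obtain ⟨C, hC⟩ := exists_le_add_mul_of_limsup_lt hbdd (lt_add_of_pos_right L hε)
  have hlim : Tendsto (fun n : ℕ => (n : ℝ)⁻¹ * C + (L + ε)) atTop (𝓝 (L + ε)) := by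
    simpa using (tendsto_inv_atTop_zero.comp tendsto_natCast_atTop_atTop).mul_const C
      |>.add_const (L + ε)
  have hle : ∀ n : ℕ, (n : ℝ)⁻¹ * a n ≤ (n : ℝ)⁻¹ * C + (L + ε) := by
    intro n
    obtain ⟨m, hmn, ham⟩ := hab n
    rcases n.eq_zero_or_pos with rfl | hn
    · simp only [Nat.cast_zero, inv_zero, zero_mul, zero_add]
      linarith
    have hbound : a n ≤ C + n * (L + ε) :=
      ham.trans ((hC m).trans (by gcongr))
    calc (n : ℝ)⁻¹ * a n ≤ (n : ℝ)⁻¹ * (C + n * (L + ε)) := by gcongr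
      _ = (n : ℝ)⁻¹ * C + (L + ε) := by field_simp
  rw [← hlim.limsup_eq]
  exact limsup_le_limsup (Eventually.of_forall hle)
    (isCoboundedUnder_le_of_le atTop fun n => mul_nonneg (inv_nonneg.2 n.cast_nonneg) (ha n))
    hlim.isBoundedUnder_le

namespace PiecewiseExpanding

variable {d : ℕ} {M : Set (Euc d)} {T : Euc d → Euc d} {abar : ℝ}
variable (P : PiecewiseExpanding d M T abar)

def closureCount (n : ℕ) (x : Euc d) : ℕ :=
  (Finset.univ.filter fun w : Fin n → P.I => x ∈ closure (P.cyl n w)).card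

def boundaryCount (n : ℕ) : ℕ :=
  (Finset.univ.filter fun w : Fin n → P.I => (P.bdO ∩ closure (P.cyl n w)).Nonempty).card

lemma closureCount_le_pow (n : ℕ) (x : Euc d) : P.closureCount n x ≤ Fintype.card P.I ^ n :=
  (Finset.card_filter_le _ _).trans_eq (by simp)

lemma inv_mul_log_boundaryCount_le (n : ℕ) :
    (n : ℝ)⁻¹ * Real.log (P.boundaryCount n) ≤ Real.log (Fintype.card P.I) := by
  have hle : P.boundaryCount n ≤ Fintype.card P.I ^ n :=
    (Finset.card_filter_le _ _).trans_eq (by simp)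
  rcases n.eq_zero_or_pos with rfl | hn
  · simpa using Real.log_natCast_nonneg _
  · rw [inv_mul_le_iff₀ (by exact_mod_cast hn)]
    simpa using Real.log_natCast_le_log_natCast hle

lemma pressure_one_bdO :
    P.pressure (fun _ _ => 1) P.bdO =
      atTop.limsup fun n : ℕ => (n : ℝ)⁻¹ * Real.log (P.boundaryCount n) := by
  unfold pressure boundaryCount
  congr! 4 with n
  rw [Finset.card_eq_sum_ones, Nat.cast_sum, Nat.cast_one]
  refine Finset.sum_congr rfl fun w hw => ?_
  obtain ⟨y, -, hy⟩ := (Finset.mem_filter.1 hw).2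
  rw [(closure_nonempty_iff.1 ⟨y, hy⟩).image_const, csSup_singleton]

lemma mem_bdO_of_mem_closure {i : P.I} {x : Euc d} (hx : x ∈ closure (P.O i))
    (hx' : x ∉ P.O i) : x ∈ P.bdO :=
  mem_iUnion.2 ⟨i, by rw [(P.isOpen_O i).frontier_eq]; exact ⟨hx, hx'⟩⟩

lemma cyl_succ_subset {n : ℕ} (w : Fin (n + 1) → P.I) : P.cyl (n + 1) w ⊆ P.O (w 0) :=
  fun _ hz => mem_iInter.1 hz 0

lemma image_cyl_succ_subset {n : ℕ} (w : Fin (n + 1) → P.I) :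
    T '' P.cyl (n + 1) w ⊆ P.cyl n (Fin.tail w) := by
  rintro _ ⟨z, hz, rfl⟩
  refine mem_iInter.2 fun k => ?_
  have hk := mem_iInter.1 hz k.succ
  rw [mem_preimage, Fin.val_succ, Function.iterate_succ_apply] at hk
  exact hk

lemma mem_closure_cyl_tail {n : ℕ} {w : Fin (n + 1) → P.I} {x : Euc d}
    (hxO : x ∈ P.O (w 0)) (hx : x ∈ closure (P.cyl (n + 1) w)) :
    T x ∈ closure (P.cyl n (Fin.tail w)) := by
  have hcont : ContinuousAt (P.Ttil (w 0)) x :=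
    (P.Ttil_smooth _).1.continuousOn.continuousAt
      ((P.isOpen_Otil _).mem_nhds (P.closure_subset _ (subset_closure hxO)))
  have himage : P.Ttil (w 0) '' P.cyl (n + 1) w = T '' P.cyl (n + 1) w :=
    ((P.T_eq _).mono (P.cyl_succ_subset w)).symm.image_eq
  rw [P.T_eq _ hxO]
  exact closure_mono (himage ▸ P.image_cyl_succ_subset w)
    (hcont.continuousWithinAt.mem_closure_image hx)

lemma closureCount_succ_le {n : ℕ} {x : Euc d} (hx : x ∉ P.bdO) :
    P.closureCount (n + 1) x ≤ P.closureCount n (T x) := by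
  set W := Finset.univ.filter fun w : Fin (n + 1) → P.I => x ∈ closure (P.cyl (n + 1) w)
  have hmemO : ∀ w ∈ W, x ∈ P.O (w 0) := fun w hw => by
    by_contra hxO
    exact hx (P.mem_bdO_of_mem_closure
      (closure_mono (P.cyl_succ_subset w) (Finset.mem_filter.1 hw).2) hxO)
  have hhead : ∀ w ∈ W, ∀ w' ∈ W, w 0 = w' 0 := fun w hw w' hw' => by
    by_contra hne
    exact disjoint_left.1 (P.disj hne) (hmemO w hw) (hmemO w' hw')
  refine Finset.card_le_card_of_injOn Fin.tail (fun w hw => ?_) fun w hw w' hw' htail => ?_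
  · exact Finset.mem_filter.2 ⟨Finset.mem_univ _,
      P.mem_closure_cyl_tail (hmemO w hw) (Finset.mem_filter.1 hw).2⟩
  · rw [← Fin.cons_self_tail w, ← Fin.cons_self_tail w', hhead w hw w' hw', htail]

lemma exists_closureCount_le_boundaryCount (n : ℕ) (x : Euc d) (hx : 2 ≤ P.closureCount n x) :
    ∃ m ≤ n, P.closureCount n x ≤ P.boundaryCount m := by
  induction n generalizing x with
  | zero => exact absurd (hx.trans (P.closureCount_le_pow 0 x)) (by simp)
  | succ n ih =>
    by_cases hbd : x ∈ P.bdO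
    · exact ⟨n + 1, le_rfl, Finset.card_le_card fun w hw =>
        Finset.mem_filter.2 ⟨Finset.mem_univ _, x, hbd, (Finset.mem_filter.1 hw).2⟩⟩
    · have hle := P.closureCount_succ_le (n := n) hbd
      obtain ⟨m, hmn, hm⟩ := ih (T x) (hx.trans hle)
      exact ⟨m, hmn.trans n.le_succ, hle.trans hm⟩

lemma exists_log_DbN_le_log_boundaryCount (n : ℕ) :
    ∃ m ≤ n, Real.log (P.DbN n) ≤ Real.log (P.boundaryCount m) := by
  have hlog : ∀ x, ∃ m ≤ n, Real.log (P.closureCount n x) ≤ Real.log (P.boundaryCount m) := by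
    intro x
    rcases lt_or_ge (P.closureCount n x) 2 with h | h
    · refine ⟨n, le_rfl, ?_⟩
      refine (Real.log_natCast_le_log_natCast (Nat.le_of_lt_succ h)).trans ?_
      simpa using Real.log_natCast_nonneg _
    · obtain ⟨m, hmn, hm⟩ := P.exists_closureCount_le_boundaryCount n x h
      exact ⟨m, hmn, Real.log_natCast_le_log_natCast hm⟩
  change ∃ m ≤ n, Real.log (sSup (P.closureCount n '' M) : ℕ) ≤ _
  rcases (P.closureCount n '' M).eq_empty_or_nonempty with hM | hM
  · refine ⟨n, le_rfl, ?_⟩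
    simpa [hM] using Real.log_natCast_nonneg _
  · obtain ⟨x, -, hx⟩ :=
      Nat.sSup_mem hM ⟨_, forall_mem_image.2 fun x _ => P.closureCount_le_pow n x⟩
    rw [← hx]
    exact hlog x

end PiecewiseExpanding

theorem complexity_at_beginning_le_boundary_entropy_general
    {d : ℕ} {M : Set (Euc d)}
    {T : Euc d → Euc d} {abar : ℝ}
    (P : PiecewiseExpanding d M T abar) :
    P.Db ≤ P.pressure (fun _ _ => 1) P.bdO := by
  rw [P.pressure_one_bdO]
  exact limsup_inv_mul_le_of_forall_exists_le (fun n => Real.log_natCast_nonneg _)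
    (fun n => Real.log_natCast_nonneg _) (isBoundedUnder_of ⟨_, P.inv_mul_log_boundaryCount_le⟩)
    P.exists_log_DbN_le_log_boundaryCount

/-- Remark 2.5, eq. (2.12) of Baladi–Castorrini: the asymptotic complexity
at the beginning is bounded by the boundary entropy, `D^b(T) ≤ P*_top(T, 0, ∂𝒪)`. -/
theorem complexity_at_beginning_le_boundary_entropy
    {d : ℕ} (hd : 1 ≤ d) {M : Set (Euc d)} (hM : IsCompact M) (hMconn : IsConnected M)
    {T : Euc d → Euc d} {abar : ℝ} (habar : 1 < abar)
    (P : PiecewiseExpanding d M T abar) :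
    P.Db ≤ P.pressure (fun _ _ => 1) P.bdO :=
  complexity_at_beginning_le_boundary_entropy_general P
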